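/- Let A = [a₁,…,a_r] be an admissible linear chain. Then the chain TW_{a_r−1} ∗ TW_{a_{r−1}−1} ∗ ⋯ ∗ TW_{a₁−1} is admissible and its inductance equals 1 − e(Aᵀ). (That is, A* = TW_{a_r−1} ∗ ⋯ ∗ TW_{a₁−1}.) -/

import Mathlib

/-- The tridiagonal matrix associated to a linear chain `A = [a₁,…,a_r]`:
diagonal entries `aᵢ`, entries `-1` immediately above/below the diagonal, `0` elsewhere. -/
def chainMatrix (A : List ℤ) : Matrix (Fin A.length) (Fin A.length) ℤ :=
  fun i j =>
    if i = j then A.get i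
    else if (i : ℕ) + 1 = (j : ℕ) ∨ (j : ℕ) + 1 = (i : ℕ) then -1 else 0

/-- The discriminant `d(A)` of a linear chain: the determinant of `chainMatrix A`
(the `0 × 0` determinant being `1` for the empty list). -/
def disc (A : List ℤ) : ℤ := (chainMatrix A).det

/-- A linear chain is admissible if it is nonempty and all of its entries are `≥ 2`. -/
def Admissible (A : List ℤ) : Prop := A ≠ [] ∧ ∀ a ∈ A, 2 ≤ a

/-- The inductance `e(A) = d(A̅)/d(A)` of a linear chain, as a rational number. -/
def inductance (A : List ℤ) : ℚ := (disc A.tail : ℚ) / (disc A : ℚ)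

/-- `TW n`: the list consisting of `n` copies of the integer `2`. -/
def TW (n : ℕ) : List ℤ := List.replicate n 2

/-- The `∗`-product of two (nonempty) integer lists:
`[a₁,…,a_r] ∗ [b₁,…,b_s] = [a₁,…,a_{r−1}, a_r + b₁ − 1, b₂,…,b_s]`. -/
def sprod (A B : List ℤ) : List ℤ :=
  A.dropLast ++ (A.getLast! + B.head! - 1) :: B.tail

/-- The `∗`-product of a nonempty list of nonempty integer lists. -/
def sprodAll : List (List ℤ) → List ℤ
  | [] => []
  | [l] => l
  | l :: l' :: ls => sprod l (sprodAll (l' :: ls))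


/-!
The proof works with discriminants rather than inductances. For
`sprodTW [a₁,…,a_r] = TW_{a₁−1} ∗ ⋯ ∗ TW_{a_r−1}`, induction on the chain shows
`d(sprodTW R) = d(R)` and `d((sprodTW R)̅) = d(R) − d(R̅)`, so `e(sprodTW R) = 1 − e(R)`; the
theorem is the case `R = Aᵀ`. The induction step rests on the three-term recurrence
`d([a, b, …]) = a · d([b, …]) − d([…])`, by which `d(TW_k ++ L)` is affine in `k`.
-/

theorem disc_nil : disc [] = 1 := Matrix.det_fin_zero

theorem disc_singleton (a : ℤ) : disc [a] = a := by
  simp [disc, chainMatrix]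

theorem chainMatrix_submatrix_succ (a : ℤ) (L : List ℤ) :
    (chainMatrix (a :: L)).submatrix Fin.succ Fin.succ = chainMatrix L := by
  ext i j
  simp [chainMatrix, Fin.succ_inj]

theorem disc_cons_cons (a b : ℤ) (C : List ℤ) :
    disc (a :: b :: C) = a * disc (b :: C) - disc C := by
  let M : Matrix (Fin (C.length + 2)) (Fin (C.length + 2)) ℤ := chainMatrix (a :: b :: C)
  have hrow : ∀ j : Fin C.length, M 0 j.succ.succ = 0 := fun j => by
    simp [M, chainMatrix, Fin.ext_iff]
  have hcol : ∀ i : Fin C.length, M i.succ.succ 0 = 0 := fun i => by simp [M, chainMatrix]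
  have hminor₀ : M.submatrix Fin.succ Fin.succ = chainMatrix (b :: C) :=
    chainMatrix_submatrix_succ a (b :: C)
  have hminor₁ : (M.submatrix Fin.succ (Fin.succAbove 1)).submatrix Fin.succ Fin.succ =
      chainMatrix C := by
    ext i j
    simp [M, chainMatrix, Fin.succAbove, Fin.lt_def]
  have hminor₁_det : (M.submatrix Fin.succ (Fin.succAbove 1)).det = -disc C := by
    rw [Matrix.det_succ_column_zero, Fin.sum_univ_succ,
      Finset.sum_eq_zero fun i _ => by simp [hcol], Fin.succAbove_zero, hminor₁]
    simp [M, chainMatrix, disc]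
  change M.det = _
  rw [Matrix.det_succ_row_zero, Fin.sum_univ_succ, Fin.sum_univ_succ,
    Finset.sum_eq_zero fun j _ => by simp [hrow], Fin.succAbove_zero, Fin.succ_zero_eq_one,
    hminor₁_det, hminor₀]
  simp [M, disc, chainMatrix]
  ring

theorem disc_cons_add (a c : ℤ) (T : List ℤ) :
    disc ((a + c) :: T) = disc (a :: T) + c * disc T := by
  cases T with
  | nil => simp [disc_singleton, disc_nil]
  | cons b C => rw [disc_cons_cons, disc_cons_cons]; ring

theorem TW_succ_append (k : ℕ) (L : List ℤ) : TW (k + 1) ++ L = 2 :: (TW k ++ L) := rfl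

theorem disc_TW_append (k : ℕ) {L : List ℤ} (hL : L ≠ []) :
    disc (TW k ++ L) = disc L + k * (disc L - disc L.tail) := by
  obtain ⟨b, C, rfl⟩ := List.exists_cons_of_ne_nil hL
  match k with
  | 0 => simp [TW]
  | 1 => simp [TW, disc_cons_cons]; ring
  | k + 2 =>
    rw [TW_succ_append, TW_succ_append, disc_cons_cons, ← TW_succ_append, disc_TW_append k hL,
      disc_TW_append (k + 1) hL]
    push_cast
    ring

theorem disc_tail_TW_append (k : ℕ) {L : List ℤ} (hL : L ≠ []) :
    disc (TW k ++ L).tail = disc L + (k - 1) * (disc L - disc L.tail) := by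
  cases k with
  | zero => simp [TW]
  | succ k =>
    rw [TW_succ_append, List.tail_cons, disc_TW_append k hL]
    push_cast
    ring

theorem sprod_TW_succ_cons (k : ℕ) (b : ℤ) (T : List ℤ) :
    sprod (TW (k + 1)) (b :: T) = TW k ++ (b + 1) :: T := by
  simp [sprod, TW, List.replicate_succ']
  ring

theorem disc_TW_sprod (k : ℕ) {B : List ℤ} (hB : B ≠ []) :
    disc (sprod (TW (k + 1)) B) = (k + 1) * disc B + disc B.tail := by
  obtain ⟨b, T, rfl⟩ := List.exists_cons_of_ne_nil hB
  rw [sprod_TW_succ_cons, disc_TW_append k (by simp), disc_cons_add]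
  simp only [List.tail_cons]
  ring

theorem disc_tail_TW_sprod (k : ℕ) {B : List ℤ} (hB : B ≠ []) :
    disc (sprod (TW (k + 1)) B).tail = k * disc B + disc B.tail := by
  obtain ⟨b, T, rfl⟩ := List.exists_cons_of_ne_nil hB
  rw [sprod_TW_succ_cons, disc_tail_TW_append k (by simp), disc_cons_add]
  simp only [List.tail_cons]
  ring

theorem Admissible.of_cons {a : ℤ} {B : List ℤ} (h : Admissible (a :: B)) (hB : B ≠ []) :
    Admissible B :=
  ⟨hB, fun x hx => h.2 x (List.mem_cons_of_mem a hx)⟩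

theorem Admissible.disc_tail_pos_and_lt {A : List ℤ} (hA : Admissible A) :
    0 < disc A.tail ∧ disc A.tail < disc A := by
  obtain ⟨a, B, rfl⟩ := List.exists_cons_of_ne_nil hA.1
  have ha : 2 ≤ a := hA.2 a (by simp)
  cases B with
  | nil => simp only [List.tail_cons, disc_nil, disc_singleton]; omega
  | cons b C =>
    obtain ⟨hC, hCB⟩ := (hA.of_cons (List.cons_ne_nil b C)).disc_tail_pos_and_lt
    simp only [List.tail_cons, disc_cons_cons] at hC hCB ⊢
    exact ⟨hC.trans hCB, by nlinarith⟩

theorem Admissible.disc_pos {A : List ℤ} (hA : Admissible A) : 0 < disc A :=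
  hA.disc_tail_pos_and_lt.1.trans hA.disc_tail_pos_and_lt.2

theorem Admissible.reverse {A : List ℤ} (hA : Admissible A) : Admissible A.reverse :=
  ⟨by simpa using hA.1, fun a ha => hA.2 a (List.mem_reverse.1 ha)⟩

theorem admissible_TW {n : ℕ} (hn : n ≠ 0) : Admissible (TW n) :=
  ⟨by simpa [TW] using hn, fun a ha => (List.eq_of_mem_replicate ha).ge⟩

theorem Admissible.sprod {A B : List ℤ} (hA : Admissible A) (hB : Admissible B) :
    Admissible (sprod A B) := by
  obtain ⟨A', x, rfl⟩ := (List.eq_nil_or_concat' A).resolve_left hA.1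
  obtain ⟨y, B', rfl⟩ := List.exists_cons_of_ne_nil hB.1
  refine ⟨by simp [_root_.sprod], fun c hc => ?_⟩
  have hx := hA.2 x (by simp)
  have hy := hB.2 y (by simp)
  simp only [_root_.sprod, List.dropLast_concat, List.getLast!_eq_getLast?_getD,
    List.getLast?_concat, Option.getD_some, List.head!_cons, List.tail_cons, List.mem_append,
    List.mem_cons] at hc
  rcases hc with hc | rfl | hc
  · exact hA.2 c (by simp [hc])
  · omega
  · exact hB.2 c (by simp [hc])

theorem Admissible.sprodAll :
    ∀ {L : List (List ℤ)}, L ≠ [] → (∀ A ∈ L, Admissible A) → Admissible (sprodAll L)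
  | [A], _, h => h A (by simp)
  | A :: B :: L, _, h =>
    (h A (by simp)).sprod (Admissible.sprodAll (by simp) fun C hC => h C (by simp [hC]))

def sprodTW (R : List ℤ) : List ℤ := sprodAll (R.map fun a => TW (a - 1).toNat)

theorem admissible_sprodTW {R : List ℤ} (hR : Admissible R) : Admissible (sprodTW R) :=
  Admissible.sprodAll (by simpa using hR.1) fun A hA => by
    obtain ⟨a, ha, rfl⟩ := List.mem_map.1 hA
    exact admissible_TW (by have := hR.2 a ha; omega)

theorem disc_sprodTW {R : List ℤ} (hR : Admissible R) :
    disc (sprodTW R) = disc R ∧ disc (sprodTW R).tail = disc R - disc R.tail := by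
  obtain ⟨a, R', rfl⟩ := List.exists_cons_of_ne_nil hR.1
  obtain ⟨k, hk⟩ : ∃ k : ℕ, (a - 1).toNat = k + 1 :=
    ⟨(a - 2).toNat, by have := hR.2 a (by simp); omega⟩
  have hka : (k : ℤ) = a - 2 := by omega
  cases R' with
  | nil =>
    have h : sprodTW [a] = TW k ++ [2] := by
      rw [sprodTW, List.map_singleton, sprodAll, hk, TW, List.replicate_succ']; rfl
    rw [h, disc_TW_append k (by simp), disc_tail_TW_append k (by simp)]
    simp only [List.tail_cons, disc_singleton, disc_nil, hka]
    constructor <;> ring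
  | cons a' R' =>
    have hR' := hR.of_cons (List.cons_ne_nil a' R')
    have h : sprodTW (a :: a' :: R') = sprod (TW (k + 1)) (sprodTW (a' :: R')) := by
      rw [← hk]; rfl
    have hne := (admissible_sprodTW hR').1
    obtain ⟨ih, ih_tail⟩ := disc_sprodTW hR'
    rw [h, disc_TW_sprod k hne, disc_tail_TW_sprod k hne, ih, ih_tail, disc_cons_cons, hka]
    simp only [List.tail_cons]
    constructor <;> ring

/-- Lemma 2.3 (ii): for an admissible linear chain `A = [a₁,…,a_r]`,
`A* = TW_{a_r−1} ∗ TW_{a_{r−1}−1} ∗ ⋯ ∗ TW_{a₁−1}`; i.e. the right-hand side is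
admissible and its inductance is `1 − e(Aᵀ)`. -/
theorem adjoint_eq_sprod_TW (A : List ℤ) (hA : Admissible A) :
    Admissible (sprodAll (A.reverse.map fun a => TW (a - 1).toNat)) ∧
    inductance (sprodAll (A.reverse.map fun a => TW (a - 1).toNat)) =
      1 - inductance A.reverse := by
  have hR := hA.reverse
  obtain ⟨hdisc, hdisc_tail⟩ := disc_sprodTW hR
  refine ⟨admissible_sprodTW hR, ?_⟩
  change inductance (sprodTW A.reverse) = 1 - inductance A.reverse
  have hdisc_ne : (disc A.reverse : ℚ) ≠ 0 := by exact_mod_cast hR.disc_pos.ne'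
  rw [inductance, inductance, hdisc, hdisc_tail]
  push_cast
  field_simp
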